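/- arXiv:2401.03933 — 3 statements merged into one kernel-verified Lean document; each statement's English description precedes it below -/
import Mathlib

section
/- Every cycle Cₙ with n ≥ 3 and n ≠ 5 admits a partition of its vertex set into three parts (A₁, A₂, A₃) such that ⋃_{i=1}^{3} (V − N[Aᵢ]) is an independent set. -/
open SimpleGraph

def closedNbhd {V : Type*} (G : SimpleGraph V) (X : Set V) : Set V :=
  X ∪ {v | ∃ x ∈ X, G.Adj x v}

def col (n v : ℕ) : ℕ :=
  if n % 3 = 0 then v % 3
  else if n % 3 = 1 then (if v = n - 1 then 1 else v % 3)
  else (if v = n - 4 then 2 else if v = n - 3 then 1 else if v = n - 1 then 2 else v % 3)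

lemma col_lt (n v : ℕ) : col n v < 3 := by
  unfold col; split_ifs <;> omega

lemma col_spec0 (n v : ℕ) (h : n % 3 = 0) : col n v = v % 3 := by
  simp [col, h]

lemma col_spec1 (n v : ℕ) (h : n % 3 = 1) :
    (v = n - 1 ∧ col n v = 1) ∨ (v ≠ n - 1 ∧ col n v = v % 3) := by
  unfold col; split_ifs <;> omega

lemma col_spec2 (n v : ℕ) (h : n % 3 = 2) :
    (v = n - 4 ∧ col n v = 2) ∨ (v ≠ n - 4 ∧ v = n - 3 ∧ col n v = 1) ∨
    (v ≠ n - 4 ∧ v ≠ n - 3 ∧ v = n - 1 ∧ col n v = 2) ∨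
    (v ≠ n - 4 ∧ v ≠ n - 3 ∧ v ≠ n - 1 ∧ col n v = v % 3) := by
  unfold col; split_ifs <;> omega

set_option maxHeartbeats 1600000 in
lemma key (n : ℕ) (hn : 3 ≤ n) (a b v i : ℕ) (hv : v < n) (hi : i < 3)
    (ha : (1 ≤ v ∧ a = v - 1) ∨ (v = 0 ∧ a = n - 1))
    (hb : (v + 1 < n ∧ b = v + 1) ∨ (v = n - 1 ∧ b = 0))
    (h1 : col n a ≠ i) (h2 : col n v ≠ i) (h3 : col n b ≠ i) :
    (n % 3 = 1 ∧ (v = 0 ∨ v = n - 2)) ∨ (n % 3 = 2 ∧ (v = n - 5 ∨ v = n - 1)) := by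
  have hn3 : n % 3 = 0 ∨ n % 3 = 1 ∨ n % 3 = 2 := by omega
  rcases hn3 with h | h | h
  · rw [col_spec0 n a h] at h1
    rw [col_spec0 n v h] at h2
    rw [col_spec0 n b h] at h3
    omega
  · have s1 := col_spec1 n a h
    have s2 := col_spec1 n v h
    have s3 := col_spec1 n b h
    omega
  · have s1 := col_spec2 n a h
    have s2 := col_spec2 n v h
    have s3 := col_spec2 n b h
    rcases ha with ha | ha <;> rcases hb with hb | hb <;>
      rcases s2 with s2 | s2 | s2 | s2 <;>
      rcases s1 with s1 | s1 | s1 | s1 <;> rcases s3 with s3 | s3 | s3 | s3 <;> omega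

lemma mod2 {n a : ℕ} (h : a < 2 * n) (hn : 0 < n) :
    a % n = a ∨ (n ≤ a ∧ a % n = a - n) := by
  rcases Nat.lt_or_ge a n with h' | h'
  · exact Or.inl (Nat.mod_eq_of_lt h')
  · right
    refine ⟨h', ?_⟩
    rw [Nat.mod_eq_sub_mod h', Nat.mod_eq_of_lt (by omega)]

lemma adj_iff {n : ℕ} (hn : 3 ≤ n) (u v : Fin n) :
    (cycleGraph n).Adj u v ↔
      (u.val + 1 = v.val ∨ v.val + 1 = u.val ∨
        (u.val = 0 ∧ v.val + 1 = n) ∨ (v.val = 0 ∧ u.val + 1 = n)) := by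
  have h1 : (u - v).val = (n - v.val + u.val) % n := by
    rw [Fin.sub_def]
  have h2 : (v - u).val = (n - u.val + v.val) % n := by
    rw [Fin.sub_def]
  rw [cycleGraph_adj', h1, h2]
  have hu := u.isLt
  have hv := v.isLt
  rcases mod2 (show n - v.val + u.val < 2 * n by omega) (by omega) with ha | ha <;>
    rcases mod2 (show n - u.val + v.val < 2 * n by omega) (by omega) with hb | hb <;>
    omega

theorem stmt3 (n : ℕ) (hn : 3 ≤ n) (hn5 : n ≠ 5) :
    ∃ A : Fin 3 → Set (Fin n),
      (∀ v : Fin n, ∃! i : Fin 3, v ∈ A i) ∧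
      (∀ u v : Fin n, u ∈ (⋃ i : Fin 3, (closedNbhd (cycleGraph n) (A i))ᶜ) →
        v ∈ (⋃ i : Fin 3, (closedNbhd (cycleGraph n) (A i))ᶜ) →
        ¬ (cycleGraph n).Adj u v) := by
  have hpos : 0 < n := by omega
  refine ⟨fun i => {v | col n v.val = i.val}, ?_, ?_⟩
  · intro v
    refine ⟨⟨col n v.val, col_lt n v.val⟩, rfl, ?_⟩
    intro j hj
    exact Fin.ext hj.symm
  · intro u v hu hv hadj
    -- extract the "missing color" data for a vertex
    have main : ∀ w : Fin n, w ∈ (⋃ i : Fin 3, (closedNbhd (cycleGraph n) ((fun i => {v : Fin n | col n v.val = i.val}) i))ᶜ) →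
        (n % 3 = 1 ∧ (w.val = 0 ∨ w.val = n - 2)) ∨
        (n % 3 = 2 ∧ (w.val = n - 5 ∨ w.val = n - 1)) := by
      intro w hw
      simp only [Set.mem_iUnion, Set.mem_compl_iff, closedNbhd, Set.mem_union,
        Set.mem_setOf_eq, not_or, not_exists, not_and] at hw
      obtain ⟨i, hwi, hall⟩ := hw
      set a : Fin n := ⟨(w.val + (n - 1)) % n, Nat.mod_lt _ hpos⟩ with ha
      set b : Fin n := ⟨(w.val + 1) % n, Nat.mod_lt _ hpos⟩ with hb
      have hw' := w.isLt
      have hav : a.val = (w.val + (n - 1)) % n := rfl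
      have hbv : b.val = (w.val + 1) % n := rfl
      have hadja : (cycleGraph n).Adj a w := by
        rw [adj_iff hn]
        rcases mod2 (show w.val + (n - 1) < 2 * n by omega) hpos with h | h <;> omega
      have hadjb : (cycleGraph n).Adj b w := by
        rw [adj_iff hn]
        rcases mod2 (show w.val + 1 < 2 * n by omega) hpos with h | h <;> omega
      have h1 : col n a.val ≠ i.val := fun h => hall a h hadja
      have h3 : col n b.val ≠ i.val := fun h => hall b h hadjb
      have ha' : (1 ≤ w.val ∧ a.val = w.val - 1) ∨ (w.val = 0 ∧ a.val = n - 1) := by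
        rcases mod2 (show w.val + (n - 1) < 2 * n by omega) hpos with h | h <;> omega
      have hb' : (w.val + 1 < n ∧ b.val = w.val + 1) ∨ (w.val = n - 1 ∧ b.val = 0) := by
        rcases mod2 (show w.val + 1 < 2 * n by omega) hpos with h | h <;> omega
      exact key n hn a.val b.val w.val i.val w.isLt i.isLt ha' hb' h1 hwi h3
    have hu' := main u hu
    have hv' := main v hv
    rw [adj_iff hn] at hadj
    have := u.isLt
    have := v.isLt
    omega
end

section
/- If G is a connected graph of order at least 3, then there exists a (not necessarily induced) star subgraph S on at least 3 vertices (i.e., a vertex x together with at least two of its neighbors) such that G − V(S) has at most one component containing an edge. -/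
/-!
Fix a root `r` and prove, by induction on `|A|`, that every connected vertex set `A ∋ r` with at
least three vertices contains a star after whose removal every remaining edge of `A` lies in the
component of `r`. If some component `C` of `A - r` has at least three vertices, the star obtained
for `C`, rooted at a neighbour `s` of `r`, works for `A`: what is left of `C` hangs on `s`, hence
on `r`, and the other components of `A - r` are untouched and attached to `r`. Otherwise every
component of `A - r` has at most two vertices and contains a neighbour of `r`; then the star at
`r` on all its neighbours (or, if `r` has a single neighbour `s`, the star at `s` on `r` and a
neighbour of `s`) leaves no edge at all.
-/

open SimpleGraph

namespace SimpleGraph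

variable {V : Type*} {G : SimpleGraph V}

def ReachableIn (G : SimpleGraph V) (B : Set V) (u v : V) : Prop :=
  ∃ p : G.Walk u v, ∀ w ∈ p.support, w ∈ B

def componentIn (G : SimpleGraph V) (B : Set V) (u : V) : Set V :=
  {w | G.ReachableIn B u w}

namespace ReachableIn

variable {B B' : Set V} {u v w : V}

lemma refl (hu : u ∈ B) : G.ReachableIn B u u := ⟨Walk.nil, by simpa using hu⟩

lemma right_mem (h : G.ReachableIn B u v) : v ∈ B :=
  h.elim fun p hp => hp v p.end_mem_support

lemma symm (h : G.ReachableIn B u v) : G.ReachableIn B v u := by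
  obtain ⟨p, hp⟩ := h
  exact ⟨p.reverse, fun w hw => hp w (by simpa using hw)⟩

lemma trans (h : G.ReachableIn B u v) (h' : G.ReachableIn B v w) : G.ReachableIn B u w := by
  obtain ⟨p, hp⟩ := h
  obtain ⟨q, hq⟩ := h'
  refine ⟨p.append q, fun x hx => ?_⟩
  rcases Walk.mem_support_append_iff _ _ |>.1 hx with hx | hx
  exacts [hp x hx, hq x hx]

lemma mono (hB : B ⊆ B') (h : G.ReachableIn B u v) : G.ReachableIn B' u v := by
  obtain ⟨p, hp⟩ := h
  exact ⟨p, fun w hw => hB (hp w hw)⟩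

lemma componentIn (h : G.ReachableIn B u v) : G.ReachableIn (G.componentIn B u) u v := by
  classical
  obtain ⟨p, hp⟩ := h
  exact ⟨p, fun w hw =>
    ⟨p.takeUntil w hw, fun x hx => hp x (p.support_takeUntil_subset_support hw hx)⟩⟩

lemma reachable_induce (h : G.ReachableIn B u v) (hu : u ∈ B) (hv : v ∈ B) :
    (G.induce B).Reachable ⟨u, hu⟩ ⟨v, hv⟩ := by
  obtain ⟨p, hp⟩ := h
  exact ⟨p.induce B hp⟩

lemma exists_adj_of_ne (h : G.ReachableIn B u v) (huv : u ≠ v) : ∃ t ∈ B, G.Adj u t := by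
  obtain ⟨p, hp⟩ := h
  cases p with
  | nil => exact absurd rfl huv
  | cons hadj q => exact ⟨_, hp _ (by simp), hadj⟩

end ReachableIn

lemma Adj.reachableIn {B : Set V} {u v : V} (h : G.Adj u v) (hu : u ∈ B) (hv : v ∈ B) :
    G.ReachableIn B u v :=
  ⟨h.toWalk, fun w hw => by
    rcases (by simpa using hw : w = u ∨ w = v) with rfl | rfl <;> assumption⟩

lemma mem_componentIn_self {B : Set V} {u : V} (hu : u ∈ B) : u ∈ G.componentIn B u :=
  ReachableIn.refl hu

lemma componentIn_subset (B : Set V) (u : V) : G.componentIn B u ⊆ B :=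
  fun _ hw => ReachableIn.right_mem hw

variable {A : Set V} {r : V}

lemma exists_adj_root (hconn : ∀ v ∈ A, G.ReachableIn A r v) {u : V} (hu : u ∈ A \ {r}) :
    ∃ s, G.Adj r s ∧ G.ReachableIn (A \ {r}) u s := by
  obtain ⟨p, hp⟩ := (hconn u hu.1).symm
  have hr : r ∉ G.componentIn (A \ {r}) u := fun h => (ReachableIn.right_mem h).2 rfl
  obtain ⟨d, hd, hfst, hsnd⟩ := p.exists_boundary_dart _ (mem_componentIn_self hu) hr
  have hsndA : d.snd ∈ A := hp _ (p.dart_snd_mem_support_of_mem_darts hd)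
  have hsnd_eq : d.snd = r := by
    by_contra hne
    exact hsnd (hfst.trans (d.adj.reachableIn hfst.right_mem ⟨hsndA, hne⟩))
  exact ⟨d.fst, hsnd_eq ▸ d.adj.symm, hfst⟩

lemma reachableIn_root_of_notMem_componentIn (hconn : ∀ v ∈ A, G.ReachableIn A r v)
    (hr : r ∈ A) {s w : V} (hw : w ∈ A \ G.componentIn (A \ {r}) s) :
    G.ReachableIn (A \ G.componentIn (A \ {r}) s) w r := by
  set C := G.componentIn (A \ {r}) s
  have hrC : r ∉ C := fun h => (ReachableIn.right_mem h).2 rfl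
  by_cases hwr : w = r
  · rw [hwr]; exact ReachableIn.refl ⟨hr, hrC⟩
  obtain ⟨s', hs', hws'⟩ := exists_adj_root hconn ⟨hw.1, hwr⟩
  have hdisj : G.componentIn (A \ {r}) w ⊆ A \ C := fun y hy =>
    ⟨(ReachableIn.right_mem hy).1, fun hyC => hw.2 (hyC.trans hy.symm)⟩
  have hws'' := hws'.componentIn.mono hdisj
  exact hws''.trans (hs'.symm.reachableIn hws''.right_mem ⟨hr, hrC⟩)

/-- Removing the star `{x} ∪ L` from `A` leaves at most one nontrivial component, that of `r`. -/
def IsRootedStar (G : SimpleGraph V) (A : Set V) (r x : V) (L : Set V) : Prop :=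
  x ∈ A ∧ L ⊆ A ∩ G.neighborSet x ∧ 2 ≤ L.ncard ∧
    ∀ u v, u ∈ A \ ({x} ∪ L) → v ∈ A \ ({x} ∪ L) → G.Adj u v →
      G.ReachableIn (A \ ({x} ∪ L)) u r

lemma IsRootedStar.lift {s x : V} {L : Set V}
    (hconn : ∀ v ∈ A, G.ReachableIn A r v) (hr : r ∈ A) (hrs : G.Adj r s)
    (h : G.IsRootedStar (G.componentIn (A \ {r}) s) s x L) : G.IsRootedStar A r x L := by
  set C := G.componentIn (A \ {r}) s
  obtain ⟨hx, hL, hL2, hedge⟩ := h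
  have hCA : C ⊆ A \ {r} := componentIn_subset _ _
  have hSC : {x} ∪ L ⊆ C :=
    Set.union_subset (Set.singleton_subset_iff.2 hx) fun y hy => (hL hy).1
  have houtside : A \ C ⊆ A \ ({x} ∪ L) := Set.sdiff_subset_sdiff_right hSC
  have hrC : r ∈ A \ C := ⟨hr, fun h => (hCA h).2 rfl⟩
  refine ⟨(hCA hx).1, fun y hy => ⟨(hCA (hL hy).1).1, (hL hy).2⟩, hL2,
    fun u v hu hv huv => ?_⟩
  by_cases huC : u ∈ C
  · by_cases hvC : v ∈ C
    · have hus := hedge u v ⟨huC, hu.2⟩ ⟨hvC, hv.2⟩ huv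
      have hCS : C \ ({x} ∪ L) ⊆ A \ ({x} ∪ L) :=
        Set.sdiff_subset_sdiff_left (hCA.trans Set.sdiff_subset)
      exact (hus.mono hCS).trans (hrs.symm.reachableIn (hCS hus.right_mem) (houtside hrC))
    · exact (huv.reachableIn hu hv).trans
        ((reachableIn_root_of_notMem_componentIn hconn hr ⟨hv.1, hvC⟩).mono houtside)
  · exact (reachableIn_root_of_notMem_componentIn hconn hr ⟨hu.1, huC⟩).mono houtside

/-- `u`, `v` and the neighbour of `r` in their component would be three vertices of it. -/
lemma not_adj_of_ncard_componentIn_lt_three (hA : A.Finite)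
    (hconn : ∀ v ∈ A, G.ReachableIn A r v)
    (hsmall : ∀ s ∈ A, G.Adj r s → (G.componentIn (A \ {r}) s).ncard < 3)
    {S : Set V} (hrS : r ∈ S) (hS : ∀ s ∈ A, G.Adj r s → s ∈ S) {u v : V}
    (hu : u ∈ A \ S) (hv : v ∈ A \ S) : ¬ G.Adj u v := by
  intro huv
  have hu' : u ∈ A \ {r} := ⟨hu.1, fun h => hu.2 (h ▸ hrS)⟩
  have hv' : v ∈ A \ {r} := ⟨hv.1, fun h => hv.2 (h ▸ hrS)⟩
  obtain ⟨s, hrs, hus⟩ := exists_adj_root hconn hu'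
  have hsS := hS s hus.right_mem.1 hrs
  have hC : (G.componentIn (A \ {r}) s).Finite :=
    hA.subset ((componentIn_subset _ _).trans Set.sdiff_subset)
  have h3 : 2 < (G.componentIn (A \ {r}) s).ncard :=
    (Set.two_lt_ncard hC).2 ⟨u, hus.symm, v, hus.symm.trans (huv.reachableIn hu' hv'), s,
      ReachableIn.refl hus.right_mem, huv.ne, fun h => hu.2 (h ▸ hsS),
      fun h => hv.2 (h ▸ hsS)⟩
  exact absurd (hsmall s hus.right_mem.1 hrs) (by omega)

theorem exists_isRootedStar (hA : A.Finite) (hr : r ∈ A)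
    (hconn : ∀ v ∈ A, G.ReachableIn A r v) (h3 : 3 ≤ A.ncard) :
    ∃ x L, G.IsRootedStar A r x L := by
  induction hn : A.ncard using Nat.strong_induction_on generalizing A r with
  | _ n ih =>
  by_cases hbig : ∃ s ∈ A, G.Adj r s ∧ 3 ≤ (G.componentIn (A \ {r}) s).ncard
  · obtain ⟨s, hsA, hrs, hC3⟩ := hbig
    have hCsub : G.componentIn (A \ {r}) s ⊆ A \ {r} := componentIn_subset _ _
    have hClt : (G.componentIn (A \ {r}) s).ncard < n := hn ▸
      (Set.ncard_le_ncard hCsub (hA.subset Set.sdiff_subset)).trans_lt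
        (Set.ncard_sdiff_singleton_lt_of_mem hr hA)
    obtain ⟨x, L, hxL⟩ := ih _ hClt (hA.subset (hCsub.trans Set.sdiff_subset))
      (mem_componentIn_self ⟨hsA, hrs.ne.symm⟩) (fun v hv => hv.componentIn) hC3 rfl
    exact ⟨x, L, hxL.lift hconn hr hrs⟩
  push Not at hbig
  by_cases htwo : 2 ≤ (A ∩ G.neighborSet r).ncard
  · exact ⟨r, A ∩ G.neighborSet r, hr, subset_rfl, htwo, fun u v hu hv huv => absurd huv <|
      not_adj_of_ncard_componentIn_lt_three hA hconn hbig (Or.inl rfl)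
        (fun s hs hrs => Or.inr ⟨hs, hrs⟩) hu hv⟩
  -- Now `r` has a single neighbour `s` in `A`, and `A - r` is the component of `s`.
  obtain ⟨w₀, hw₀A, hw₀r⟩ := Set.exists_mem_notMem_of_ncard_lt_ncard
    (show ({r} : Set V).ncard < A.ncard by rw [Set.ncard_singleton]; omega)
  obtain ⟨s, hrs, hw₀s⟩ := exists_adj_root hconn ⟨hw₀A, hw₀r⟩
  have hsA : s ∈ A := hw₀s.right_mem.1
  have honly : ∀ s' ∈ A, G.Adj r s' → s' = s := fun s' hs' hrs' =>
    (Set.ncard_le_one_iff (s := A ∩ G.neighborSet r) (hA.subset Set.inter_subset_left)).1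
      (by omega) ⟨hs', hrs'⟩ ⟨hsA, hrs⟩
  obtain ⟨w, hwA, hw⟩ := Set.exists_mem_notMem_of_ncard_lt_ncard
    (show ({r, s} : Set V).ncard < A.ncard from
      (Set.ncard_insert_le r {s}).trans_lt (by rw [Set.ncard_singleton]; omega))
  obtain ⟨s', hrs', hws'⟩ := exists_adj_root hconn ⟨hwA, fun h => hw (Or.inl h)⟩
  rw [honly s' hws'.right_mem.1 hrs'] at hws'
  obtain ⟨t, ht, hst⟩ := hws'.symm.exists_adj_of_ne fun h => hw (Or.inr h.symm)
  refine ⟨s, {r, t}, hsA, ?_, ?_, fun u v hu hv huv => absurd huv <|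
    not_adj_of_ncard_componentIn_lt_three hA hconn hbig (Or.inr (Or.inl rfl))
      (fun s' hs' hrs' => Or.inl (honly s' hs' hrs')) hu hv⟩
  · rintro y (rfl | rfl)
    exacts [⟨hr, hrs.symm⟩, ⟨ht.1, hst⟩]
  · exact (Set.ncard_pair fun h => ht.2 h.symm).ge

end SimpleGraph

theorem stmt5 {V : Type*} [Fintype V] (G : SimpleGraph V)
    (hconn : G.Connected) (hcard : 3 ≤ Fintype.card V) :
    ∃ (x : V) (L : Set V), L ⊆ G.neighborSet x ∧ 2 ≤ L.ncard ∧
      ∀ c d : (G.induce (({x} ∪ L : Set V))ᶜ).ConnectedComponent,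
        (∃ u v, (G.induce (({x} ∪ L : Set V))ᶜ).Adj u v ∧
          (G.induce (({x} ∪ L : Set V))ᶜ).connectedComponentMk u = c) →
        (∃ u v, (G.induce (({x} ∪ L : Set V))ᶜ).Adj u v ∧
          (G.induce (({x} ∪ L : Set V))ᶜ).connectedComponentMk u = d) →
        c = d := by
  obtain ⟨r⟩ := hconn.nonempty
  obtain ⟨x, L, -, hL, hL2, hedge⟩ := G.exists_isRootedStar Set.finite_univ (Set.mem_univ r)
    (fun v _ => ⟨(hconn.preconnected r v).some, fun w _ => Set.mem_univ w⟩)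
    (by rwa [Set.ncard_univ, Nat.card_eq_fintype_card])
  rw [← Set.compl_eq_univ_sdiff] at hedge
  refine ⟨x, L, fun y hy => (hL hy).2, hL2, ?_⟩
  rintro c d ⟨u, v, huv, rfl⟩ ⟨u', v', hu'v', rfl⟩
  have hur := hedge u v u.2 v.2 huv
  have hu'r := hedge u' v' u'.2 v'.2 hu'v'
  rw [ConnectedComponent.sound (hur.reachable_induce u.2 hur.right_mem),
    ConnectedComponent.sound (hu'r.reachable_induce u'.2 hur.right_mem)]
end

section
/- Let G be a connected graph obtained from a graph H by adding a star S = {x, y₁, y₂} with edges xy₁ and xy₂, where y₁ and y₂ have neighbors z₁ and z₂ in H, respectively. If J is an isolating set of H containing z₁ and z₂, then J is an isolating set of G (every edge of G, including xy₁, xy₂, y₁z₁, y₂z₂, is covered). -/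
open SimpleGraph

def IsIsolating {V : Type*} (G : SimpleGraph V) (X : Set V) : Prop :=
  ∀ ⦃u v : V⦄, G.Adj u v → u ∈ closedNbhd G X ∨ v ∈ closedNbhd G X

theorem stmt18 {V : Type*} [Fintype V] (G : SimpleGraph V)
    (H0 : Set V) (x y₁ y₂ : V)
    (hx : x ∉ H0) (hy₁ : y₁ ∉ H0) (hy₂ : y₂ ∉ H0)
    (hxy₁ : x ≠ y₁) (hxy₂ : x ≠ y₂) (hy₁y₂ : y₁ ≠ y₂)
    (hcover : H0 ∪ {x, y₁, y₂} = Set.univ)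
    (hadj₁ : G.Adj x y₁) (hadj₂ : G.Adj x y₂)
    (hnady : ¬ G.Adj y₁ y₂)
    (hnadx : ∀ z ∈ H0, ¬ G.Adj x z)
    (z₁ z₂ : V) (hz₁ : z₁ ∈ H0) (hz₂ : z₂ ∈ H0)
    (hz₁adj : G.Adj y₁ z₁) (hz₂adj : G.Adj y₂ z₂)
    (J : Set V) (hJ : J ⊆ H0) (hz₁J : z₁ ∈ J) (hz₂J : z₂ ∈ J)
    (hJiso : ∀ u v : V, u ∈ H0 → v ∈ H0 → G.Adj u v →
      u ∈ closedNbhd G J ∨ v ∈ closedNbhd G J) :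
    IsIsolating G J := by
  have hy₁N : y₁ ∈ closedNbhd G J := Or.inr ⟨z₁, hz₁J, hz₁adj.symm⟩
  have hy₂N : y₂ ∈ closedNbhd G J := Or.inr ⟨z₂, hz₂J, hz₂adj.symm⟩
  intro u v huv
  have hmem : ∀ w : V, w ∈ H0 ∨ w = x ∨ w = y₁ ∨ w = y₂ := by
    intro w
    have : w ∈ H0 ∪ {x, y₁, y₂} := hcover ▸ Set.mem_univ w
    simp [Set.mem_insert_iff] at this; tauto
  rcases hmem u with hu | rfl | rfl | rfl
  · rcases hmem v with hv | rfl | rfl | rfl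
    · exact hJiso u v hu hv huv
    · exact absurd huv.symm (hnadx u hu)
    · exact Or.inr hy₁N
    · exact Or.inr hy₂N
  · -- u = x
    rcases hmem v with hv | rfl | rfl | rfl
    · exact absurd huv (hnadx v hv)
    · exact absurd rfl (G.ne_of_adj huv)
    · exact Or.inr hy₁N
    · exact Or.inr hy₂N
  · exact Or.inl hy₁N
  · exact Or.inl hy₂N
end
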